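/- Let G = C ≀ ℤ with C nontrivial cyclic, generating set S = {a, t} (a generating the copy C₀, t generating ℤ), and let A be the base of G. Then |B_S(n) ∩ A| ≤ (n+1) · |B_S(n) ∩ A₀|, where A₀ = {g ∈ A : g = 1 or min(support g) ≥ 0}. -/

import Mathlib

open Function

variable (H : Type*) [Group H]

/-- The base of the restricted wreath product `H ≀ ℤ`: finitely supported functions `ℤ → H`. -/
def RWBase : Subgroup (ℤ → H) where
  carrier := {f | (mulSupport f).Finite}
  one_mem' := by simp [mulSupport_one]
  mul_mem' := fun hf hg => ((hf.union hg).subset (mulSupport_mul _ _))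
  inv_mem' := fun hf => by simpa [mulSupport_inv] using hf

/-- The shift automorphism of the base. -/
def shiftAut (k : ℤ) : MulAut (RWBase H) where
  toFun f := ⟨fun i => (f : ℤ → H) (i - k), by
    have h : (mulSupport fun i => (f : ℤ → H) (i - k)) =
        (fun i : ℤ => i - k) ⁻¹' mulSupport (f : ℤ → H) := rfl
    show (mulSupport fun i => (f : ℤ → H) (i - k)).Finite
    rw [h]
    exact f.2.preimage (Function.Injective.injOn (f := fun i : ℤ => i - k) fun a b hab => by simpa using hab)⟩
  invFun f := ⟨fun i => (f : ℤ → H) (i + k), by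
    have h : (mulSupport fun i => (f : ℤ → H) (i + k)) =
        (fun i : ℤ => i + k) ⁻¹' mulSupport (f : ℤ → H) := rfl
    show (mulSupport fun i => (f : ℤ → H) (i + k)).Finite
    rw [h]
    exact f.2.preimage (Function.Injective.injOn (f := fun i : ℤ => i + k) fun a b hab => by simpa using hab)⟩
  left_inv f := Subtype.ext (funext fun i => by simp)
  right_inv f := Subtype.ext (funext fun i => by simp)
  map_mul' f g := rfl

/-- The action of `ℤ` on the base by shifting. -/
def shiftHom : Multiplicative ℤ →* MulAut (RWBase H) where
  toFun k := shiftAut H (Multiplicative.toAdd k)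
  map_one' := MulEquiv.ext fun f => Subtype.ext (funext fun i => by simp [shiftAut])
  map_mul' k l := MulEquiv.ext fun f => Subtype.ext (funext fun i => by
    simp [shiftAut, sub_sub])

/-- The restricted wreath product `H ≀ ℤ`. -/
abbrev WreathZ := RWBase H ⋊[shiftHom H] Multiplicative ℤ

/-- The base subgroup `A` of `H ≀ ℤ`. -/
def wreathBase : Subgroup (WreathZ H) := (SemidirectProduct.inl (φ := shiftHom H)).range

/-- The generator `t` of the head `ℤ`. -/
def tGen : WreathZ H := SemidirectProduct.inr (Multiplicative.ofAdd 1)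

/-- The element of the base supported at `0` with value `h`. -/
def single0 (h : H) : RWBase H :=
  ⟨fun i => if i = 0 then h else 1, by
    refine Set.Finite.subset (Set.finite_singleton (0 : ℤ)) fun i hi => ?_
    rw [mem_mulSupport] at hi
    by_contra h0
    exact hi (if_neg h0)⟩

/-- The inclusion of `H` as the copy at coordinate `0`. -/
def incl0 (h : H) : WreathZ H := SemidirectProduct.inl (single0 H h)

/-- The word length of `g` with respect to the generating set `S`:
the least length of a word in `S ∪ S⁻¹` representing `g`. -/
noncomputable def wordLength {G : Type*} [Group G] (S : Set G) (g : G) : ℕ :=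
  sInf {n | ∃ l : List G, (∀ x ∈ l, x ∈ S ∨ x⁻¹ ∈ S) ∧ l.prod = g ∧ l.length = n}

/-- The ball of radius `n` in the Cayley graph of `G` with respect to `S`. -/
def ball {G : Type*} [Group G] (S : Set G) (n : ℕ) : Set G :=
  {g | wordLength S g ≤ n}

/-- The translation length `τ_S(g) = limsup_n |g^n|_S / n`. -/
noncomputable def translationLength {G : Type*} [Group G] (S : Set G) (g : G) : ℝ :=
  Filter.limsup (fun n : ℕ => (wordLength S (g ^ n) : ℝ) / n) Filter.atTop

/-- The set of base elements whose support is contained in the non-negative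
integers (together with the identity). -/
def basePos (H : Type*) [Group H] : Set (WreathZ H) :=
  {g | g.right = 1 ∧ ∀ i : ℤ, i < 0 → (g.left : ℤ → H) i = 1}

/-! Conjugating by a power of `t` translates a base element. Given a geodesic word for a base
element `g`, let `-k` be the lowest position its lamplighter walk reaches, and cut the word at a
moment where the walk is there. Exchanging the two halves is the conjugation of `g` by `t ^ k`: it
keeps the length, and every lit lamp, having been visited, is at a position `≥ -k` and is moved to
a position `≥ 0`. The walk never goes below `-n`, so `0 ≤ k ≤ n`, and the pairs `(k, t^k g t^-k)`
inject `B_S(n) ∩ A` into `{0, …, n} × (B_S(n) ∩ A₀)`. -/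

open Multiplicative SemidirectProduct

theorem Nat.card_le_mul_card_of_forall_exists_lt {α : Type*} {s t : Set α} (hts : t ⊆ s)
    (m : ℕ) (σ : ℕ → α → α) (hσ : ∀ k, Injective (σ k)) (h : ∀ x ∈ s, ∃ k < m, σ k x ∈ t) :
    Nat.card s ≤ m * Nat.card t := by
  by_cases ht : t.Finite
  · have := ht.to_subtype
    choose k hk hmem using h
    let f : s → Fin m × t := fun x => (⟨k x x.2, hk x x.2⟩, ⟨σ _ x, hmem x x.2⟩)
    have hf : Injective f := by
      rintro ⟨x, hx⟩ ⟨y, hy⟩ hxy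
      simp only [f, Prod.mk.injEq, Fin.mk.injEq, Subtype.mk.injEq] at hxy
      obtain ⟨hkxy, hσxy⟩ := hxy
      rw [hkxy] at hσxy
      exact Subtype.ext (hσ _ hσxy)
    calc Nat.card s ≤ Nat.card (Fin m × t) := Nat.card_le_card_of_injective f hf
      _ = m * Nat.card t := by rw [Nat.card_prod, Nat.card_fin]
  · have : s.Infinite := fun hs => ht (hs.subset hts)
    rw [this.card_eq_zero]
    exact Nat.zero_le _

section WordLength

variable {G : Type*} [Group G] {S : Set G}

theorem wordLength_prod_le_length {l : List G} (hl : ∀ x ∈ l, x ∈ S ∨ x⁻¹ ∈ S) :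
    wordLength S l.prod ≤ l.length :=
  Nat.sInf_le ⟨l, hl, rfl, rfl⟩

theorem exists_list_prod_eq_length_eq_wordLength (hS : Subgroup.closure S = ⊤) (g : G) :
    ∃ l : List G, (∀ x ∈ l, x ∈ S ∨ x⁻¹ ∈ S) ∧ l.prod = g ∧ l.length = wordLength S g := by
  have hg : g ∈ Submonoid.closure (S ∪ S⁻¹) := by
    rw [← Subgroup.closure_toSubmonoid, hS]
    trivial
  obtain ⟨l, hl, hlg⟩ := Submonoid.exists_list_of_mem_closure hg
  have hne : {m | ∃ l : List G, (∀ x ∈ l, x ∈ S ∨ x⁻¹ ∈ S) ∧ l.prod = g ∧ l.length = m}.Nonempty :=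
    ⟨l.length, l, fun x hx => (hl x hx).imp id Set.mem_inv.1, hlg, rfl⟩
  exact Nat.sInf_mem hne

end WordLength

section Lamplighter

variable {C : Type*} [Group C]

lemma shiftHom_apply (r : Multiplicative ℤ) (f : RWBase C) (i : ℤ) :
    (shiftHom C r f : ℤ → C) i = (f : ℤ → C) (i - toAdd r) := rfl

lemma single0_apply (h : C) (i : ℤ) : (single0 C h : ℤ → C) i = if i = 0 then h else 1 := rfl

lemma single0_zpow (h : C) (j : ℤ) : single0 C (h ^ j) = single0 C h ^ j := by
  refine Subtype.ext (funext fun i => ?_)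
  rw [SubgroupClass.coe_zpow, Pi.pow_apply, single0_apply, single0_apply]
  split_ifs <;> simp

lemma tGen_zpow (k : ℤ) : tGen C ^ k = inr (ofAdd k) := by
  rw [tGen, ← map_zpow, ← ofAdd_zsmul, smul_eq_mul, mul_one]

lemma RWBase.mem_of_forall_shift_single0_mem (K : Subgroup (RWBase C))
    (hK : ∀ (z : ℤ) (x : C), shiftHom C (ofAdd z) (single0 C x) ∈ K) (b : RWBase C) : b ∈ K := by
  classical
  suffices ∀ s : Finset ℤ, ∀ b : RWBase C, (∀ i ∉ s, (b : ℤ → C) i = 1) → b ∈ K from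
    this b.2.toFinset b fun i hi => by_contra fun h => hi (b.2.mem_toFinset.2 h)
  intro s
  induction s using Finset.induction_on with
  | empty =>
    intro b hb
    rw [show b = 1 from Subtype.ext (funext fun i => hb i (Finset.notMem_empty i))]
    exact one_mem K
  | insert a s _ ih =>
    intro b hb
    set e := shiftHom C (ofAdd a) (single0 C ((b : ℤ → C) a))
    have hrest : ∀ i ∉ s, ((e⁻¹ * b : RWBase C) : ℤ → C) i = 1 := by
      intro i hi
      change ((e : ℤ → C) i)⁻¹ * (b : ℤ → C) i = 1
      rw [shiftHom_apply, toAdd_ofAdd, single0_apply]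
      by_cases hia : i = a
      · simp [hia]
      · rw [if_neg (sub_ne_zero.2 hia), inv_one, one_mul]
        exact hb i (by simp [hia, hi])
    rw [← mul_inv_cancel_left e b]
    exact mul_mem (hK a ((b : ℤ → C) a)) (ih _ hrest)

theorem closure_incl0_tGen_eq_top {c : C} (hc : Subgroup.zpowers c = ⊤) :
    Subgroup.closure ({incl0 C c, tGen C} : Set (WreathZ C)) = ⊤ := by
  set K := Subgroup.closure ({incl0 C c, tGen C} : Set (WreathZ C))
  have hinr (k : ℤ) : (inr (ofAdd k) : WreathZ C) ∈ K := by
    rw [← tGen_zpow]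
    exact zpow_mem (Subgroup.subset_closure (by simp)) k
  have hinl (b : RWBase C) : (inl b : WreathZ C) ∈ K := by
    refine RWBase.mem_of_forall_shift_single0_mem (K.comap inl) (fun z x => ?_) b
    obtain ⟨j, rfl⟩ := Subgroup.mem_zpowers_iff.1 (hc ▸ Subgroup.mem_top x)
    rw [Subgroup.mem_comap, inl_aut, map_inv, single0_zpow, map_zpow]
    exact mul_mem (mul_mem (hinr z) (zpow_mem (Subgroup.subset_closure (by simp [incl0])) j))
      (inv_mem (hinr z))
  exact eq_top_iff.2 fun g _ => inl_left_mul_inr_right g ▸ mul_mem (hinl _) (hinr _)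

namespace WreathZ

/-- The position of the lamplighter. -/
def height (g : WreathZ C) : ℤ := toAdd g.right

lemma height_mul (g h : WreathZ C) : height (g * h) = height g + height h := rfl

def IsStep (x : WreathZ C) : Prop :=
  |height x| ≤ 1 ∧ ∀ j ≠ 0, (x.left : ℤ → C) j = 1

lemma isStep_of_mem_incl0_tGen {c : C} {x : WreathZ C}
    (hx : x ∈ ({incl0 C c, tGen C} : Set (WreathZ C)) ∨
      x⁻¹ ∈ ({incl0 C c, tGen C} : Set (WreathZ C))) : IsStep x := by
  simp only [Set.mem_insert_iff, Set.mem_singleton_iff, inv_eq_iff_eq_inv] at hx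
  rcases hx with (rfl | rfl) | (rfl | rfl) <;>
    simp +contextual [IsStep, height, incl0, tGen, single0_apply]

lemma abs_height_prod_le_length {l : List (WreathZ C)} (hl : ∀ x ∈ l, IsStep x) :
    |height l.prod| ≤ l.length := by
  induction l with
  | nil => simp [height]
  | cons x l ih =>
    rw [List.forall_mem_cons] at hl
    calc |height (x :: l).prod| ≤ |height x| + |height l.prod| := by
          rw [List.prod_cons, height_mul]; exact abs_add_le _ _
      _ ≤ 1 + l.length := add_le_add hl.1.1 (ih hl.2)
      _ = (x :: l).length := by simp [add_comm]

lemma exists_height_take_prod_eq {l : List (WreathZ C)} (hl : ∀ x ∈ l, IsStep x) {j : ℤ}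
    (hj : (l.prod.left : ℤ → C) j ≠ 1) : ∃ i ≤ l.length, height (l.take i).prod = j := by
  induction l generalizing j with
  | nil => exact absurd rfl hj
  | cons x l ih =>
    rw [List.forall_mem_cons] at hl
    change (x.left : ℤ → C) j * (l.prod.left : ℤ → C) (j - height x) ≠ 1 at hj
    by_cases hxj : (x.left : ℤ → C) j = 1
    · rw [hxj, one_mul] at hj
      obtain ⟨i, hi, hij⟩ := ih hl.2 hj
      refine ⟨i + 1, by simpa using hi, ?_⟩
      rw [List.take_succ_cons, List.prod_cons, height_mul, hij, add_sub_cancel]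
    · obtain rfl : j = 0 := by_contra fun hj0 => hxj (hl.1.2 j hj0)
      exact ⟨0, Nat.zero_le _, rfl⟩

end WreathZ

open WreathZ

lemma eq_inl_left_of_right_eq_one {g : WreathZ C} (hg : g.right = 1) : g = inl g.left :=
  SemidirectProduct.ext rfl hg

lemma basePos_subset_wreathBase : basePos C ⊆ wreathBase C :=
  fun g hg => ⟨g.left, (eq_inl_left_of_right_eq_one hg.1).symm⟩

lemma inl_shiftHom_mem_basePos {k : ℤ} {f : RWBase C} (hf : ∀ j, (f : ℤ → C) j ≠ 1 → -k ≤ j) :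
    (inl (shiftHom C (ofAdd k) f) : WreathZ C) ∈ basePos C :=
  ⟨rfl, fun i hi => by_contra fun hfi => by linarith [hf (i - k) hfi]⟩

variable [IsMulCommutative C]

/-- Base elements commute, so conjugation only sees the head. -/
lemma inv_mul_mul_eq_inl_shiftHom (u : WreathZ C) {g : WreathZ C} (hg : g.right = 1) :
    u⁻¹ * g * u = inl (shiftHom C u.right⁻¹ g.left) := by
  have hcomm : (inl u.left : WreathZ C)⁻¹ * inl g.left * inl u.left = inl g.left := by
    rw [← map_inv, ← map_mul, ← map_mul, mul_assoc, mul_comm' g.left, inv_mul_cancel_left]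
  calc u⁻¹ * g * u
      = (inr u.right)⁻¹ * ((inl u.left)⁻¹ * inl g.left * inl u.left) * inr u.right := by
        conv_lhs => rw [eq_inl_left_of_right_eq_one hg, ← inl_left_mul_inr_right u]
        group
    _ = inl (shiftHom C u.right⁻¹ g.left) := by rw [hcomm, ← map_inv, ← inl_aut_inv, map_inv]

lemma tGen_zpow_mul_mul_inv (k : ℤ) {g : WreathZ C} (hg : g.right = 1) :
    tGen C ^ k * g * (tGen C ^ k)⁻¹ = inl (shiftHom C (ofAdd k) g.left) := by
  simpa [tGen_zpow] using inv_mul_mul_eq_inl_shiftHom (tGen C ^ k)⁻¹ hg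

theorem exists_tGen_pow_conj_mem_ball_inter_basePos {S : Set (WreathZ C)}
    (hS : Subgroup.closure S = ⊤) (hstep : ∀ x, x ∈ S ∨ x⁻¹ ∈ S → IsStep x) {n : ℕ}
    {g : WreathZ C} (hg : g ∈ ball S n) (hgA : g.right = 1) :
    ∃ k ≤ n, tGen C ^ (k : ℤ) * g * (tGen C ^ (k : ℤ))⁻¹ ∈ ball S n ∩ basePos C := by
  obtain ⟨l, hlS, rfl, hlen⟩ := exists_list_prod_eq_length_eq_wordLength hS g
  have hl : ∀ x ∈ l, IsStep x := fun x hx => hstep x (hlS x hx)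
  obtain ⟨i₀, hi₀, hmin⟩ := (Finset.range (l.length + 1)).exists_min_image
    (fun i => height (l.take i).prod) Finset.nonempty_range_add_one
  simp only [Finset.mem_range, Nat.lt_succ_iff] at hi₀ hmin
  obtain ⟨k, hk⟩ := Int.exists_eq_neg_ofNat (hmin 0 (Nat.zero_le _))
  have hkn : k ≤ n := by
    have := abs_height_prod_le_length (l := l.take i₀) fun x hx => hl x (List.mem_of_mem_take hx)
    rw [hk, abs_neg, Nat.abs_cast, Nat.cast_le, List.length_take] at this
    exact this.trans ((min_le_right _ _).trans (hlen ▸ hg))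
  have hrot : tGen C ^ (k : ℤ) * l.prod * (tGen C ^ (k : ℤ))⁻¹ =
      (l.drop i₀).prod * (l.take i₀).prod := by
    have hright : (l.take i₀).prod.right⁻¹ = ofAdd (k : ℤ) :=
      (congrArg (fun z => ofAdd (-z)) hk).trans (by rw [neg_neg])
    rw [tGen_zpow_mul_mul_inv _ hgA, ← hright, ← inv_mul_mul_eq_inl_shiftHom _ hgA,
      ← List.prod_take_mul_prod_drop l i₀]
    group
  refine ⟨k, hkn, ?_, ?_⟩
  · rw [hrot, ← List.prod_append]
    refine (wordLength_prod_le_length fun x hx => ?_).trans ?_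
    · rcases List.mem_append.1 hx with h | h
      exacts [hlS x (List.mem_of_mem_drop h), hlS x (List.mem_of_mem_take h)]
    · rw [List.length_append, add_comm, ← List.length_append, List.take_append_drop, hlen]
      exact hg
  · rw [tGen_zpow_mul_mul_inv _ hgA]
    refine inl_shiftHom_mem_basePos fun j hj => ?_
    obtain ⟨i, hi, rfl⟩ := exists_height_take_prod_eq hl hj
    exact hk ▸ hmin i hi

end Lamplighter

theorem lamplighter_base_card_le_general {C : Type*} [Group C] [IsCyclic C]
    (c : C) (hc : Subgroup.zpowers c = ⊤)
    (S : Set (WreathZ C)) (hS : S = {incl0 C c, tGen C}) (n : ℕ) :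
    Nat.card (ball S n ∩ (wreathBase C : Set (WreathZ C)) : Set (WreathZ C)) ≤
      (n + 1) * Nat.card (ball S n ∩ basePos C : Set (WreathZ C)) := by
  subst hS
  refine Nat.card_le_mul_card_of_forall_exists_lt
    (Set.inter_subset_inter_right _ basePos_subset_wreathBase) (n + 1)
    (fun k g => tGen C ^ (k : ℤ) * g * (tGen C ^ (k : ℤ))⁻¹)
    (fun k _ _ h => mul_left_cancel (mul_right_cancel h)) ?_
  rintro _ ⟨hg, b, rfl⟩
  obtain ⟨k, hkn, hk⟩ := exists_tGen_pow_conj_mem_ball_inter_basePos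
    (closure_incl0_tGen_eq_top hc) (fun _ => WreathZ.isStep_of_mem_incl0_tGen) hg rfl
  exact ⟨k, Nat.lt_succ_of_le hkn, hk⟩

/-- For `G = C ≀ ℤ` with `C` a nontrivial cyclic group and `S = {a, t}` (`a` a
generator of the copy `C₀`, `t` a generator of the head `ℤ`), we have
`|B_S(n) ∩ A| ≤ (n+1) · |B_S(n) ∩ A₀|`, where `A` is the base and `A₀` consists
of the base elements with support in the non-negative integers. -/
theorem lamplighter_base_card_le {C : Type*} [Group C] [IsCyclic C] [Nontrivial C]
    (c : C) (hc : Subgroup.zpowers c = ⊤)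
    (S : Set (WreathZ C)) (hS : S = {incl0 C c, tGen C}) (n : ℕ) :
    Nat.card (ball S n ∩ (wreathBase C : Set (WreathZ C)) : Set (WreathZ C)) ≤
      (n + 1) * Nat.card (ball S n ∩ basePos C : Set (WreathZ C)) :=
  lamplighter_base_card_le_general c hc S hS n
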